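/- arXiv:2407.04142 — 2 statements merged into one kernel-verified Lean document; each statement's English description precedes it below -/
import Mathlib

section
/- (Proposition 1, mean-parameter version with low-rank ν.) Suppose: (a) W ∈ ℝ^{n×(1+q)} satisfies det(Wᵀ D) ≠ 0 where D = [X | C], and η and η* are both W-balanced with the same vector b; (b) η(i)(j) = Σ_l θη(i)(l) ψ(l)(j) and η*(i)(j) = Σ_l θη*(i)(l) ψ(l)(j) with ψ orthonormal on the grid; (c) the n × (1+q+L) design matrix [X | C | θη] has full column rank; (d) ν and ν* lie in the span of ψ. If the mediator means of (α, ξ, η) and (α*, ξ*, η*) agree for all i and j, and the outcome means of (β, γ, ζ, ν, η) and (β*, γ*, ζ*, ν*, η*) agree for all i and all m : Fin p → ℝ, then α = α*, ξ = ξ*, η = η*, β = β*, γ = γ*, ζ = ζ*, and ν = ν*. -/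
open Matrix

/-!
Taking the `W`-weighted sums over subjects of the mediator equation cancels the balanced
individual effects, leaving `Wᵀ D (α - α*, ξ - ξ*) = b - b = 0` at every grid point; since
`Wᵀ D` is invertible this identifies `α`, `ξ` and then `η`. In the outcome equation the
dependence on the mediator value identifies `β`. With `ν` and `η` expanded in the orthonormal
basis `ψ`, the interaction term becomes the linear form `θν ⬝ᵥ θη i`, so the outcome mean at
`m = 0` is a linear combination of the columns of `[X | C | θη]` with coefficients
`(γ, ζ, θν)`; full column rank identifies them.
-/

section LinearAlgebra

variable {R : Type*}

theorem eq_and_eq_of_mulVec_add_eq_of_balanced [CommRing R] [IsDomain R]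
    {m k : Type*} [Fintype m] [Fintype k] [DecidableEq k] {W D : Matrix m k R}
    (hdet : (Wᵀ * D).det ≠ 0) {v v' : k → R} {u u' : m → R}
    (hbal : Wᵀ *ᵥ u = Wᵀ *ᵥ u') (h : D *ᵥ v + u = D *ᵥ v' + u') :
    v = v' ∧ u = u' := by
  have hv : v = v' := by
    apply mulVec_injective_of_det_ne_zero hdet
    have := congrArg (Wᵀ *ᵥ ·) h
    simpa only [mulVec_add, mulVec_mulVec, hbal, add_left_inj] using this
  subst hv
  exact ⟨rfl, add_left_cancel h⟩

theorem nonempty_of_det_mul_ne_zero [CommRing R] {m k : Type*} [Fintype m] [Fintype k]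
    [DecidableEq k] [Nonempty k] {A : Matrix k m R} {B : Matrix m k R} (hdet : (A * B).det ≠ 0) :
    Nonempty m := by
  by_contra hm
  rw [not_nonempty_iff] at hm
  apply hdet
  have : A * B = 0 := by ext; simp [mul_apply]
  rw [this, det_zero]

theorem of_cons_mulVec_cons [CommSemiring R] {m : Type*} [Fintype m] {q : ℕ}
    (X : m → R) (C : m → Fin q → R) (a : R) (c : Fin q → R) :
    of (fun i => Fin.cons (X i) (C i) : m → Fin (q + 1) → R) *ᵥ Fin.cons a c
      = fun i => a * X i + ∑ k, c k * C i k := by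
  ext i
  simp [mulVec, dotProduct, Fin.sum_univ_succ, mul_comm]

theorem eq_of_forall_dotProduct_add_eq [CommSemiring R] [IsCancelAdd R] {ι : Type*}
    [Fintype ι] [DecidableEq ι] {β β' : ι → R} {c c' : R}
    (h : ∀ m, β ⬝ᵥ m + c = β' ⬝ᵥ m + c') : β = β' := by
  have hc : c = c' := by simpa using h 0
  subst hc
  funext j
  simpa using h (Pi.single j 1)

theorem LinearIndependent.eq_of_cons_append [Semiring R] {M : Type*} [AddCommMonoid M]
    [Module R M] {q L : ℕ} {x : M} {f : Fin q → M} {g : Fin L → M}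
    (hli : LinearIndependent R (Fin.append (Fin.cons x f) g : Fin ((q + 1) + L) → M))
    {a a' : R} {c c' : Fin q → R} {d d' : Fin L → R}
    (h : a • x + ∑ k, c k • f k + ∑ l, d l • g l = a' • x + ∑ k, c' k • f k + ∑ l, d' l • g l) :
    a = a' ∧ c = c' ∧ d = d' := by
  have hcoef := Fintype.linearIndependent_iffₛ.mp hli
    (Fin.append (Fin.cons a c) d) (Fin.append (Fin.cons a' c') d')
    (by simpa only [Fin.sum_univ_add, Fin.append_left, Fin.append_right, Fin.sum_univ_succ,
      Fin.cons_zero, Fin.cons_succ, add_assoc] using h)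
  have hcons : (Fin.cons a c : Fin (q + 1) → R) = Fin.cons a' c' :=
    funext fun k => by simpa only [Fin.append_left] using hcoef (Fin.castAdd L k)
  exact ⟨(Fin.cons_inj.mp hcons).1, (Fin.cons_inj.mp hcons).2,
    funext fun l => by simpa only [Fin.append_right] using hcoef (Fin.natAdd (q + 1) l)⟩

end LinearAlgebra

theorem sum_mul_mul_eq_dotProduct_of_orthonormal {R : Type*} [CommSemiring R]
    {ι κ : Type*} [Fintype ι] [DecidableEq ι] [Fintype κ] {lam : κ → R} {ψ : ι → κ → R}
    (hortho : ∀ l l', ∑ j, ψ l j * ψ l' j * lam j = if l = l' then 1 else 0) (c d : ι → R) :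
    ∑ j, (∑ l, c l * ψ l j) * (∑ l, d l * ψ l j) * lam j = c ⬝ᵥ d := by
  calc ∑ j, (∑ l, c l * ψ l j) * (∑ l, d l * ψ l j) * lam j
      = ∑ l, ∑ l', c l * d l' * ∑ j, ψ l j * ψ l' j * lam j := by
        simp_rw [Finset.sum_mul_sum, Finset.sum_mul, Finset.mul_sum]
        rw [Finset.sum_comm]
        refine Finset.sum_congr rfl fun l _ => ?_
        rw [Finset.sum_comm]
        exact Finset.sum_congr rfl fun l' _ => Finset.sum_congr rfl fun j _ => by ring
    _ = c ⬝ᵥ d := by simp [hortho, dotProduct]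

theorem basmu_mediator_identifiable {m p : Type*} [Fintype m] {q : ℕ}
    (X : m → ℝ) (C : m → Fin q → ℝ) (W : Matrix m (Fin (q + 1)) ℝ) (b : Fin (q + 1) → ℝ)
    (hdet : (Wᵀ * of (fun i => Fin.cons (X i) (C i))).det ≠ 0)
    {α α' : p → ℝ} {ξ ξ' : Fin q → p → ℝ} {η η' : m → p → ℝ}
    (hbal : ∀ j k, ∑ i, W i k * η i j = b k) (hbal' : ∀ j k, ∑ i, W i k * η' i j = b k)
    (hMmean : ∀ i j, α j * X i + (∑ k, ξ k j * C i k) + η i j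
        = α' j * X i + (∑ k, ξ' k j * C i k) + η' i j) :
    α = α' ∧ ξ = ξ' ∧ η = η' := by
  have hpoint : ∀ j, α j = α' j ∧ (fun k => ξ k j) = (fun k => ξ' k j)
      ∧ (fun i => η i j) = fun i => η' i j := by
    intro j
    obtain ⟨hcoef, hη⟩ := eq_and_eq_of_mulVec_add_eq_of_balanced hdet
      (v := Fin.cons (α j) fun k => ξ k j) (v' := Fin.cons (α' j) fun k => ξ' k j)
      (u := fun i => η i j) (u' := fun i => η' i j)
      (funext fun k => by simp only [mulVec, dotProduct, transpose_apply, hbal, hbal'])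
      (by rw [of_cons_mulVec_cons, of_cons_mulVec_cons]; exact funext fun i => hMmean i j)
    exact ⟨(Fin.cons_inj.mp hcoef).1, (Fin.cons_inj.mp hcoef).2, hη⟩
  exact ⟨funext fun j => (hpoint j).1, funext fun k => funext fun j => congrFun (hpoint j).2.1 k,
    funext fun i => funext fun j => congrFun (hpoint j).2.2 i⟩

theorem basmu_outcome_identifiable {m p : Type*} [Fintype m] [Nonempty m] [Fintype p]
    [DecidableEq p] {q L : ℕ} (lam : p → ℝ) (X : m → ℝ) (C : m → Fin q → ℝ)
    {ψ : Fin L → p → ℝ}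
    (hortho : ∀ l l' : Fin L, (∑ j, ψ l j * ψ l' j * lam j) = if l = l' then (1 : ℝ) else 0)
    {η : m → p → ℝ} {θη : m → Fin L → ℝ} (hη : ∀ i j, η i j = ∑ l, θη i l * ψ l j)
    (hrank : LinearIndependent ℝ
      (Fin.append (Fin.cons X (fun k i => C i k)) (fun l i => θη i l)
        : Fin ((q + 1) + L) → m → ℝ))
    {β β' : p → ℝ} {γ γ' : ℝ} {ζ ζ' : Fin q → ℝ} {ν ν' : p → ℝ} {θν θν' : Fin L → ℝ}
    (hν : ∀ j, ν j = ∑ l, θν l * ψ l j) (hν' : ∀ j, ν' j = ∑ l, θν' l * ψ l j)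
    (hYmean : ∀ i (mVal : p → ℝ),
      (∑ j, β j * mVal j) + γ * X i + (∑ k, ζ k * C i k) + (∑ j, ν j * η i j * lam j)
        = (∑ j, β' j * mVal j) + γ' * X i + (∑ k, ζ' k * C i k)
          + (∑ j, ν' j * η i j * lam j)) :
    β = β' ∧ γ = γ' ∧ ζ = ζ' ∧ ν = ν' := by
  obtain ⟨i₀⟩ := ‹Nonempty m›
  have hβ : β = β' := eq_of_forall_dotProduct_add_eq fun mVal => by
    have h := hYmean i₀ mVal
    simp only [add_assoc] at h
    exact h
  have hinteraction : ∀ (θ : Fin L → ℝ) (ν : p → ℝ), (∀ j, ν j = ∑ l, θ l * ψ l j) →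
      ∀ i, ∑ j, ν j * η i j * lam j = θ ⬝ᵥ θη i := by
    intro θ ν hν i
    simp only [hν, hη]
    exact sum_mul_mul_eq_dotProduct_of_orthonormal hortho _ _
  obtain ⟨hγ, hζ, hθν⟩ := hrank.eq_of_cons_append (a := γ) (a' := γ') (c := ζ) (c' := ζ')
    (d := θν) (d' := θν') <| funext fun i => by
      have h := hYmean i 0
      simp only [hinteraction θν ν hν, hinteraction θν' ν' hν'] at h
      simpa [Finset.sum_apply, dotProduct, mul_comm] using h
  exact ⟨hβ, hγ, hζ, funext fun j => by rw [hν, hν', hθν]⟩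

theorem basmu_jointly_identifiable_general
    {n p q L : ℕ} (lam : Fin p → ℝ) (X : Fin n → ℝ) (C : Fin n → Fin q → ℝ)
    (W : Matrix (Fin n) (Fin (q + 1)) ℝ) (b : Fin (q + 1) → ℝ)
    (hdet : (Wᵀ * Matrix.of (fun i => Fin.cons (X i) (C i))).det ≠ 0)
    (ψ : Fin L → Fin p → ℝ)
    (hortho : ∀ l l' : Fin L,
      (∑ j, ψ l j * ψ l' j * lam j) = if l = l' then (1 : ℝ) else 0)
    (α α' : Fin p → ℝ) (ξ ξ' : Fin q → Fin p → ℝ) (η η' : Fin n → Fin p → ℝ)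
    (θη : Fin n → Fin L → ℝ)
    (hη : ∀ i j, η i j = ∑ l, θη i l * ψ l j)
    (hbal : ∀ (j : Fin p) (k : Fin (q + 1)), ∑ i, W i k * η i j = b k)
    (hbal' : ∀ (j : Fin p) (k : Fin (q + 1)), ∑ i, W i k * η' i j = b k)
    (hrank : LinearIndependent ℝ
      (Fin.append (Fin.cons X (fun k i => C i k)) (fun l i => θη i l)
        : Fin ((q + 1) + L) → Fin n → ℝ))
    (β β' : Fin p → ℝ) (γ γ' : ℝ) (ζ ζ' : Fin q → ℝ) (ν ν' : Fin p → ℝ)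
    (θν θν' : Fin L → ℝ)
    (hν : ∀ j, ν j = ∑ l, θν l * ψ l j)
    (hν' : ∀ j, ν' j = ∑ l, θν' l * ψ l j)
    (hMmean : ∀ (i : Fin n) (j : Fin p),
      α j * X i + (∑ k, ξ k j * C i k) + η i j
        = α' j * X i + (∑ k, ξ' k j * C i k) + η' i j)
    (hYmean : ∀ (i : Fin n) (mVal : Fin p → ℝ),
      (∑ j, β j * mVal j) + γ * X i + (∑ k, ζ k * C i k) + (∑ j, ν j * η i j * lam j)
        = (∑ j, β' j * mVal j) + γ' * X i + (∑ k, ζ' k * C i k)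
          + (∑ j, ν' j * η' i j * lam j)) :
    α = α' ∧ ξ = ξ' ∧ η = η' ∧ β = β' ∧ γ = γ' ∧ ζ = ζ' ∧ ν = ν' := by
  obtain ⟨rfl, rfl, rfl⟩ := basmu_mediator_identifiable X C W b hdet hbal hbal' hMmean
  have : Nonempty (Fin n) := nonempty_of_det_mul_ne_zero hdet
  exact ⟨rfl, rfl, rfl, basmu_outcome_identifiable lam X C hortho hη hrank hν hν' hYmean⟩

/-- **Proposition 1 (joint identifiability of BASMU, mean-parameter version, low-rank ν).**
Under (a) `det(Wᵀ[X|C]) ≠ 0` with `η`, `η*` both `W`-balanced with the same `b`;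
(b) low-rank individual effects with an orthonormal basis `ψ`; (c) full column rank of
the design matrix `[X | C | θη]`; and (d) `ν`, `ν*` in the span of `ψ`, equality of all
mediator means and all outcome means forces all parameters to coincide. -/
theorem basmu_jointly_identifiable
    {n p q L : ℕ} (lam : Fin p → ℝ) (X : Fin n → ℝ) (C : Fin n → Fin q → ℝ)
    (W : Matrix (Fin n) (Fin (q + 1)) ℝ) (b : Fin (q + 1) → ℝ)
    (hdet : (Wᵀ * Matrix.of (fun i => Fin.cons (X i) (C i))).det ≠ 0)
    (ψ : Fin L → Fin p → ℝ)
    (hortho : ∀ l l' : Fin L,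
      (∑ j, ψ l j * ψ l' j * lam j) = if l = l' then (1 : ℝ) else 0)
    (α α' : Fin p → ℝ) (ξ ξ' : Fin q → Fin p → ℝ) (η η' : Fin n → Fin p → ℝ)
    (θη θη' : Fin n → Fin L → ℝ)
    (hη : ∀ i j, η i j = ∑ l, θη i l * ψ l j)
    (hη' : ∀ i j, η' i j = ∑ l, θη' i l * ψ l j)
    (hbal : ∀ (j : Fin p) (k : Fin (q + 1)), ∑ i, W i k * η i j = b k)
    (hbal' : ∀ (j : Fin p) (k : Fin (q + 1)), ∑ i, W i k * η' i j = b k)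
    (hrank : LinearIndependent ℝ
      (Fin.append (Fin.cons X (fun k i => C i k)) (fun l i => θη i l)
        : Fin ((q + 1) + L) → Fin n → ℝ))
    (β β' : Fin p → ℝ) (γ γ' : ℝ) (ζ ζ' : Fin q → ℝ) (ν ν' : Fin p → ℝ)
    (θν θν' : Fin L → ℝ)
    (hν : ∀ j, ν j = ∑ l, θν l * ψ l j)
    (hν' : ∀ j, ν' j = ∑ l, θν' l * ψ l j)
    (hMmean : ∀ (i : Fin n) (j : Fin p),
      α j * X i + (∑ k, ξ k j * C i k) + η i j
        = α' j * X i + (∑ k, ξ' k j * C i k) + η' i j)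
    (hYmean : ∀ (i : Fin n) (mVal : Fin p → ℝ),
      (∑ j, β j * mVal j) + γ * X i + (∑ k, ζ k * C i k) + (∑ j, ν j * η i j * lam j)
        = (∑ j, β' j * mVal j) + γ' * X i + (∑ k, ζ' k * C i k)
          + (∑ j, ν' j * η' i j * lam j)) :
    α = α' ∧ ξ = ξ' ∧ η = η' ∧ β = β' ∧ γ = γ' ∧ ζ = ζ' ∧ ν = ν' :=
  basmu_jointly_identifiable_general lam X C W b hdet ψ hortho α α' ξ ξ' η η' θη hη hbal hbal' hrank
    β β' γ γ' ζ ζ' ν ν' θν θν' hν hν' hMmean hYmean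
end

section
/- (Proposition 2(ii), BASMU full-model part.) Assume (1/n) M̃_nᵀ M̃_n converges in probability to H + σ_M² I, (1/n) M̃_nᵀ U_n converges in probability to h⁰, (1/n) M̃_nᵀ Û_n converges in probability to ĥ, and the deterministic matrices satisfy (1/n) D_n → 0. Then the conditional bias of the full-model (BASMU) estimator, B_n^F = (M̃_nᵀM̃_n + D_n)⁻¹ (M̃_nᵀ (U_n − Û_n) − D_n θ⁰), converges in probability to (H + σ_M² I)⁻¹ (h⁰ − ĥ). -/
/-!
Dividing both factors by `n`, the bias is `(n⁻¹(M̃ᵀM̃ + D))⁻¹ (n⁻¹(M̃ᵀ(U - Û) - Dθ⁰))`. Entrywise,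
the matrix converges in probability to `H + σ_M² I` and the vector to `h⁰ - ĥ`, because the
deterministic terms `n⁻¹D` vanish. The limit matrix is positive definite, hence invertible, and
`(A, v) ↦ A⁻¹v` is continuous at every invertible `A`; the continuous mapping theorem for
convergence in probability to a constant then gives the claim.
-/

open MeasureTheory Matrix Filter Topology

namespace MeasureTheory

variable {Ω ι : Type*} [MeasurableSpace Ω] {μ : Measure Ω} {l : Filter ι}
  {E F : Type*} [PseudoMetricSpace E] [PseudoMetricSpace F]

lemma tendstoInMeasure_const_of_tendsto {c : ι → E} {b : E} (h : Tendsto c l (𝓝 b)) :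
    TendstoInMeasure μ (fun i (_ : Ω) => c i) l (fun _ => b) := by
  rw [tendstoInMeasure_iff_dist]
  intro ε hε
  refine tendsto_const_nhds.congr' ?_
  filter_upwards [Metric.tendsto_nhds.mp h ε hε] with i hi
  simp [not_le.mpr hi]

namespace TendstoInMeasure

lemma comp_continuousAt {f : ι → Ω → E} {a : E} (hf : TendstoInMeasure μ f l (fun _ => a))
    {g : E → F} (hg : ContinuousAt g a) :
    TendstoInMeasure μ (fun i ω => g (f i ω)) l (fun _ => g a) := by
  rw [tendstoInMeasure_iff_dist] at hf ⊢
  intro ε hε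
  obtain ⟨δ, hδ, hgδ⟩ := Metric.continuousAt_iff.mp hg ε hε
  refine tendsto_of_tendsto_of_tendsto_of_le_of_le tendsto_const_nhds (hf δ hδ)
    (fun _ => zero_le) (fun i => measure_mono fun ω hω => ?_)
  by_contra hfar
  exact (not_lt.mpr hω) (hgδ (not_le.mp hfar))

lemma prodMk {f : ι → Ω → E} {a : E} {g : ι → Ω → F} {b : F}
    (hf : TendstoInMeasure μ f l (fun _ => a)) (hg : TendstoInMeasure μ g l (fun _ => b)) :
    TendstoInMeasure μ (fun i ω => (f i ω, g i ω)) l (fun _ => (a, b)) := by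
  rw [tendstoInMeasure_iff_dist] at hf hg ⊢
  intro ε hε
  refine tendsto_of_tendsto_of_tendsto_of_le_of_le tendsto_const_nhds
    (by simpa using (hf ε hε).add (hg ε hε)) (fun _ => zero_le) (fun i => ?_)
  refine (measure_mono fun ω hω => ?_).trans (measure_union_le _ _)
  simpa only [Set.mem_union, Set.mem_ofPred_eq, Prod.dist_eq, le_max_iff] using hω

end TendstoInMeasure

lemma tendstoInMeasure_pi {κ : Type*} [Fintype κ] {X : κ → Type*}
    [∀ k, PseudoMetricSpace (X k)] {f : ι → Ω → ∀ k, X k} {a : ∀ k, X k}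
    (h : ∀ k, TendstoInMeasure μ (fun i ω => f i ω k) l (fun _ => a k)) :
    TendstoInMeasure μ f l (fun _ => a) := by
  simp_rw [tendstoInMeasure_iff_dist] at h ⊢
  intro ε hε
  refine tendsto_of_tendsto_of_tendsto_of_le_of_le tendsto_const_nhds
    (by simpa using tendsto_finsetSum Finset.univ fun k _ => h k ε hε)
    (fun _ => zero_le) (fun i => ?_)
  refine (measure_mono fun ω hω => ?_).trans (measure_iUnion_fintype_le _ _)
  by_contra hfar
  simp only [Set.mem_iUnion, Set.mem_ofPred_eq, not_exists, not_le] at hfar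
  exact (not_lt.mpr hω) ((dist_pi_lt_iff hε).mpr hfar)

lemma TendstoInMeasure.matrix_inv_mulVec {m 𝕜 : Type*} [Fintype m] [DecidableEq m]
    [NormedField 𝕜] {A : ι → Ω → Matrix m m 𝕜} {A₀ : Matrix m m 𝕜} {v : ι → Ω → m → 𝕜}
    {v₀ : m → 𝕜} (hA₀ : A₀.det ≠ 0)
    (hA : ∀ i j, TendstoInMeasure μ (fun n ω => A n ω i j) l (fun _ => A₀ i j))
    (hv : ∀ i, TendstoInMeasure μ (fun n ω => v n ω i) l (fun _ => v₀ i)) :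
    TendstoInMeasure μ (fun n ω => (A n ω)⁻¹ *ᵥ v n ω) l (fun _ => A₀⁻¹ *ᵥ v₀) := by
  have hentries : TendstoInMeasure μ (fun n ω => of.symm (A n ω)) l (fun _ => of.symm A₀) :=
    tendstoInMeasure_pi fun i => tendstoInMeasure_pi fun j => hA i j
  have hinv : ContinuousAt (Inv.inv : Matrix m m 𝕜 → Matrix m m 𝕜) A₀ :=
    continuousAt_matrix_inv A₀ (by simpa [Ring.inverse_eq_inv'] using continuousAt_inv₀ hA₀)
  have hsolve : ContinuousAt (fun p : (m → m → 𝕜) × (m → 𝕜) => (of p.1)⁻¹ *ᵥ p.2)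
      (of.symm A₀, v₀) :=
    (continuous_fst.matrix_mulVec continuous_snd).continuousAt.comp
      ((hinv.comp continuousAt_fst).prodMk continuousAt_snd)
  have hpair : TendstoInMeasure μ (fun n ω => (of.symm (A n ω), v n ω)) l
      (fun _ => (of.symm A₀, v₀)) := hentries.prodMk (tendstoInMeasure_pi hv)
  exact hpair.comp_continuousAt (g := fun p : (m → m → 𝕜) × (m → 𝕜) => (of p.1)⁻¹ *ᵥ p.2)
    hsolve

end MeasureTheory

/-- For singular `A` both sides are `0` by the `Matrix.inv` convention. -/
lemma Matrix.inv_smul_mulVec_smul {m K : Type*} [Fintype m] [DecidableEq m] [Field K]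
    {c : K} (hc : c ≠ 0) (A : Matrix m m K) (v : m → K) :
    (c • A)⁻¹ *ᵥ (c • v) = A⁻¹ *ᵥ v := by
  by_cases hA : IsUnit A.det
  · have hinv : (c • A)⁻¹ = c⁻¹ • A⁻¹ :=
      inv_eq_left_inv (by simp [smul_smul, hc, nonsing_inv_mul A hA])
    rw [hinv, smul_mulVec, mulVec_smul, smul_smul, inv_mul_cancel₀ hc, one_smul]
  · have hcA : ¬ IsUnit (c • A).det := by
      rwa [det_smul, IsUnit.mul_iff, not_and_or, or_iff_right (by simp [hc])]
    rw [nonsing_inv_apply_not_isUnit _ hA, nonsing_inv_apply_not_isUnit _ hcA]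
    simp

theorem basmu_asymptotic_bias_general
    {Ω : Type*} [MeasurableSpace Ω] (P : Measure Ω)
    {L : ℕ} (σM : ℝ) (hσM : 0 < σM)
    (H : Matrix (Fin L) (Fin L) ℝ) (hH : H.PosSemidef)
    (h0 hhat : Fin L → ℝ) (θ0 : Fin L → ℝ)
    (M : (n : ℕ) → Ω → Matrix (Fin n) (Fin L) ℝ)
    (U Uhat : (n : ℕ) → Ω → Fin n → ℝ)
    (D : ℕ → Matrix (Fin L) (Fin L) ℝ)
    (hMM : ∀ l l' : Fin L, TendstoInMeasure P
      (fun (n : ℕ) (ω : Ω) => (n : ℝ)⁻¹ * (((M n ω)ᵀ * M n ω) l l')) atTop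
      (fun _ => (H + σM ^ 2 • (1 : Matrix (Fin L) (Fin L) ℝ)) l l'))
    (hMU : ∀ l : Fin L, TendstoInMeasure P
      (fun (n : ℕ) (ω : Ω) => (n : ℝ)⁻¹ * (((M n ω)ᵀ *ᵥ U n ω) l)) atTop
      (fun _ => h0 l))
    (hMUhat : ∀ l : Fin L, TendstoInMeasure P
      (fun (n : ℕ) (ω : Ω) => (n : ℝ)⁻¹ * (((M n ω)ᵀ *ᵥ Uhat n ω) l)) atTop
      (fun _ => hhat l))
    (hDlim : Tendsto (fun n : ℕ => ((n : ℝ)⁻¹) • D n) atTop (nhds 0)) :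
    TendstoInMeasure P
      (fun (n : ℕ) (ω : Ω) =>
        ((M n ω)ᵀ * M n ω + D n)⁻¹ *ᵥ
          ((M n ω)ᵀ *ᵥ (U n ω - Uhat n ω) - (D n) *ᵥ θ0)) atTop
      (fun _ => (H + σM ^ 2 • (1 : Matrix (Fin L) (Fin L) ℝ))⁻¹ *ᵥ (h0 - hhat)) := by
  have hdet : (H + σM ^ 2 • (1 : Matrix (Fin L) (Fin L) ℝ)).det ≠ 0 :=
    (PosDef.posSemidef_add hH (PosDef.one.smul (pow_pos hσM 2))).det_pos.ne'
  have hgram : ∀ l l', TendstoInMeasure P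
      (fun (n : ℕ) ω => ((n : ℝ)⁻¹ • ((M n ω)ᵀ * M n ω + D n)) l l') atTop
      (fun _ => (H + σM ^ 2 • (1 : Matrix (Fin L) (Fin L) ℝ)) l l') := by
    intro l l'
    have hDentry := tendstoInMeasure_const_of_tendsto (μ := P)
      (((continuous_id.matrix_elem l l').tendsto 0).comp hDlim)
    simpa [mul_add] using
      ((hMM l l').prodMk hDentry).comp_continuousAt continuous_add.continuousAt
  have hcross : ∀ l, TendstoInMeasure P
      (fun (n : ℕ) ω => ((n : ℝ)⁻¹ • ((M n ω)ᵀ *ᵥ (U n ω - Uhat n ω) - D n *ᵥ θ0)) l) atTop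
      (fun _ => (h0 - hhat) l) := by
    intro l
    have hDθ := tendstoInMeasure_const_of_tendsto (μ := P)
      ((((continuous_apply l).comp
        (continuous_id.matrix_mulVec (continuous_const (y := θ0)))).tendsto 0).comp hDlim)
    have := (((hMU l).prodMk (hMUhat l)).prodMk hDθ).comp_continuousAt
      (g := fun p : (ℝ × ℝ) × ℝ => p.1.1 - p.1.2 - p.2) (by fun_prop)
    simpa [mulVec_sub, smul_mulVec, mul_sub] using this
  refine (TendstoInMeasure.matrix_inv_mulVec hdet hgram hcross).congr' ?_ EventuallyEq.rfl
  filter_upwards [eventually_ne_atTop 0] with n hn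
  exact .of_forall fun ω => inv_smul_mulVec_smul (by positivity) _ _

/-- **Proposition 2(ii), BASMU full-model part.**
If `(1/n) M̃ₙᵀM̃ₙ → H + σ_M² I` in probability (entrywise), `(1/n) M̃ₙᵀUₙ → h⁰`,
`(1/n) M̃ₙᵀÛₙ → ĥ` in probability, and `(1/n) Dₙ → 0`, then the conditional bias of the
full-model (BASMU) estimator, `Bₙᶠ = (M̃ₙᵀM̃ₙ + Dₙ)⁻¹ (M̃ₙᵀ(Uₙ − Ûₙ) − Dₙθ⁰)`,
converges in probability to `(H + σ_M² I)⁻¹ (h⁰ − ĥ)`. -/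
theorem basmu_asymptotic_bias
    {Ω : Type*} [MeasurableSpace Ω] (P : Measure Ω) [IsProbabilityMeasure P]
    {L : ℕ} (σM : ℝ) (hσM : 0 < σM)
    (H : Matrix (Fin L) (Fin L) ℝ) (hH : H.PosSemidef)
    (h0 hhat : Fin L → ℝ) (θ0 : Fin L → ℝ)
    (M : (n : ℕ) → Ω → Matrix (Fin n) (Fin L) ℝ)
    (U Uhat : (n : ℕ) → Ω → Fin n → ℝ)
    (D : ℕ → Matrix (Fin L) (Fin L) ℝ) (hD : ∀ n, (D n).PosSemidef)
    (hMM : ∀ l l' : Fin L, TendstoInMeasure P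
      (fun (n : ℕ) (ω : Ω) => (n : ℝ)⁻¹ * (((M n ω)ᵀ * M n ω) l l')) atTop
      (fun _ => (H + σM ^ 2 • (1 : Matrix (Fin L) (Fin L) ℝ)) l l'))
    (hMU : ∀ l : Fin L, TendstoInMeasure P
      (fun (n : ℕ) (ω : Ω) => (n : ℝ)⁻¹ * (((M n ω)ᵀ *ᵥ U n ω) l)) atTop
      (fun _ => h0 l))
    (hMUhat : ∀ l : Fin L, TendstoInMeasure P
      (fun (n : ℕ) (ω : Ω) => (n : ℝ)⁻¹ * (((M n ω)ᵀ *ᵥ Uhat n ω) l)) atTop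
      (fun _ => hhat l))
    (hDlim : Tendsto (fun n : ℕ => ((n : ℝ)⁻¹) • D n) atTop (nhds 0)) :
    TendstoInMeasure P
      (fun (n : ℕ) (ω : Ω) =>
        ((M n ω)ᵀ * M n ω + D n)⁻¹ *ᵥ
          ((M n ω)ᵀ *ᵥ (U n ω - Uhat n ω) - (D n) *ᵥ θ0)) atTop
      (fun _ => (H + σM ^ 2 • (1 : Matrix (Fin L) (Fin L) ℝ))⁻¹ *ᵥ (h0 - hhat)) :=
  basmu_asymptotic_bias_general P σM hσM H hH h0 hhat θ0 M U Uhat D hMM hMU hMUhat hDlim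
end
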